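/- arXiv:2306.10148 — 6 statements merged into one kernel-verified Lean document; each statement's English description precedes it below -/
import Mathlib

section
/- Let m_0, m_1, …, m_g be positive integers, let e_i = gcd(m_0, …, m_i) for 0 ≤ i ≤ g and N_i = e_{i-1}/e_i for 1 ≤ i ≤ g, and let S = ⟨m_0, …, m_g⟩ be the additive submonoid of the nonnegative integers generated by m_0, …, m_g. Assume that N_i·m_i ∈ ⟨m_0, …, m_{i-1}⟩ for all 1 ≤ i ≤ g and that N_i·m_i < m_{i+1} for all 1 ≤ i ≤ g−1. Then every element a ∈ S can be written in one and only one way as a = k_0·m_0 + k_1·m_1 + … + k_g·m_g with nonnegative integers k_i satisfying 0 ≤ k_i < N_i for all 1 ≤ i ≤ g. -/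
/-! Existence: by induction on `g`, write `a = b + c m_g` with `b ∈ ⟨m_0, …, m_{g-1}⟩` and reduce
`c` modulo `N_g`; the part `⌊c / N_g⌋ N_g m_g` is absorbed into `b` because
`N_g m_g ∈ ⟨m_0, …, m_{g-1}⟩`.

Uniqueness: all terms with `j < g` are multiples of `e_{g-1}`, so `k_g m_g` is determined modulo
`e_{g-1}`. As `gcd(e_{g-1}, m_g) = e_g`, this determines `k_g` modulo `N_g = e_{g-1} / e_g`, hence
outright since `k_g < N_g`; then induct. -/

open Finset

section

variable (m : ℕ → ℕ)

def partialGcd (i : ℕ) : ℕ := (range (i + 1)).gcd m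

lemma partialGcd_succ (i : ℕ) :
    partialGcd m (i + 1) = Nat.gcd (m (i + 1)) (partialGcd m i) := by
  rw [partialGcd, range_add_one, gcd_insert]
  rfl

variable {m}

lemma partialGcd_dvd {i j : ℕ} (hji : j ≤ i) : partialGcd m i ∣ m j :=
  Finset.gcd_dvd (mem_range.2 (Nat.lt_succ_of_le hji))

lemma partialGcd_pos (hm0 : 0 < m 0) (i : ℕ) : 0 < partialGcd m i :=
  Nat.pos_of_dvd_of_pos (partialGcd_dvd i.zero_le) hm0

lemma partialGcd_succ_dvd (i : ℕ) : partialGcd m (i + 1) ∣ partialGcd m i := by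
  rw [partialGcd_succ]
  exact Nat.gcd_dvd_right _ _

lemma partialGcd_div_succ_pos (hm0 : 0 < m 0) (i : ℕ) :
    0 < partialGcd m i / partialGcd m (i + 1) :=
  Nat.div_pos (Nat.le_of_dvd (partialGcd_pos hm0 i) (partialGcd_succ_dvd i))
    (partialGcd_pos hm0 _)

lemma partialGcd_dvd_sum (k : ℕ → ℕ) (i : ℕ) :
    partialGcd m i ∣ ∑ j ∈ range (i + 1), k j * m j :=
  dvd_sum fun _ hj => dvd_mul_of_dvd_right (partialGcd_dvd (Nat.lt_succ_iff.1 (mem_range.1 hj))) _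

lemma modEq_div_partialGcd_succ (hm0 : 0 < m 0) {i c d : ℕ}
    (h : c * m (i + 1) ≡ d * m (i + 1) [MOD partialGcd m i]) :
    c ≡ d [MOD partialGcd m i / partialGcd m (i + 1)] := by
  have := h.cancel_right_div_gcd (partialGcd_pos hm0 i)
  rwa [Nat.gcd_comm, ← partialGcd_succ] at this

theorem eq_of_sum_mul_eq_sum_mul (hm0 : 0 < m 0) {N : ℕ → ℕ}
    (hN : ∀ i, N (i + 1) = partialGcd m i / partialGcd m (i + 1)) {n : ℕ} {k k' : ℕ → ℕ}
    (hk : ∀ i, 1 ≤ i → i ≤ n → k i < N i) (hk' : ∀ i, 1 ≤ i → i ≤ n → k' i < N i)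
    (h : ∑ j ∈ range (n + 1), k j * m j = ∑ j ∈ range (n + 1), k' j * m j) :
    ∀ j ≤ n, k j = k' j := by
  induction n with
  | zero =>
    intro j hj
    obtain rfl := Nat.le_zero.1 hj
    simpa [hm0.ne'] using h
  | succ n ih =>
    rw [sum_range_succ _ (n + 1), sum_range_succ _ (n + 1)] at h
    have htop : k (n + 1) = k' (n + 1) := by
      have hlow : ∑ j ∈ range (n + 1), k j * m j ≡ ∑ j ∈ range (n + 1), k' j * m j
          [MOD partialGcd m n] :=
        (Nat.modEq_zero_iff_dvd.2 (partialGcd_dvd_sum k n)).trans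
          (Nat.modEq_zero_iff_dvd.2 (partialGcd_dvd_sum k' n)).symm
      have hmod := modEq_div_partialGcd_succ hm0 (hlow.add_left_cancel (congrArg (· % _) h))
      rw [← hN] at hmod
      exact hmod.eq_of_lt_of_lt (hk _ le_add_self le_rfl) (hk' _ le_add_self le_rfl)
    rw [htop] at h
    intro j hj
    rcases Nat.lt_or_ge j (n + 1) with hjn | hjn
    · exact ih (fun i h1 h2 => hk i h1 (by omega)) (fun i h1 h2 => hk' i h1 (by omega))
        (Nat.add_right_cancel h) j (by omega)
    · rwa [show j = n + 1 by omega]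

lemma exists_add_mul_of_mem_closure_image_Iic_succ {n a : ℕ}
    (ha : a ∈ AddSubmonoid.closure (m '' Set.Iic (n + 1))) :
    ∃ b ∈ AddSubmonoid.closure (m '' Set.Iic n), ∃ c, a = b + c * m (n + 1) := by
  rw [← Order.succ_eq_add_one, Order.Iic_succ, Set.image_insert_eq, Set.insert_eq,
    AddSubmonoid.closure_union, AddSubmonoid.mem_sup] at ha
  obtain ⟨x, hx, b, hb, rfl⟩ := ha
  obtain ⟨c, rfl⟩ := AddSubmonoid.mem_closure_singleton.1 hx
  exact ⟨b, hb, c, by rw [smul_eq_mul, add_comm]; rfl⟩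

theorem exists_repr_of_mul_mem_closure {N : ℕ → ℕ} {n : ℕ}
    (hNpos : ∀ i, 1 ≤ i → i ≤ n → 0 < N i)
    (hNmem : ∀ i, 1 ≤ i → i ≤ n → N i * m i ∈ AddSubmonoid.closure (m '' Set.Iio i))
    {a : ℕ} (ha : a ∈ AddSubmonoid.closure (m '' Set.Iic n)) :
    ∃ k : ℕ → ℕ, (∀ j, n < j → k j = 0) ∧ (∀ i, 1 ≤ i → i ≤ n → k i < N i) ∧
      a = ∑ j ∈ range (n + 1), k j * m j := by
  induction n generalizing a with
  | zero =>
    rw [← Nat.bot_eq_zero, Set.Iic_bot, Set.image_singleton,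
      AddSubmonoid.mem_closure_singleton] at ha
    obtain ⟨c, rfl⟩ := ha
    exact ⟨Pi.single 0 c, fun j hj => Pi.single_eq_of_ne hj.ne' _, by omega, by simp⟩
  | succ n ih =>
    obtain ⟨b, hb, c, rfl⟩ := exists_add_mul_of_mem_closure_image_Iic_succ ha
    have hN := hNpos (n + 1) le_add_self le_rfl
    have hlow : b + c / N (n + 1) * (N (n + 1) * m (n + 1)) ∈
        AddSubmonoid.closure (m '' Set.Iic n) := by
      refine add_mem hb (AddSubmonoid.nsmul_mem _ ?_ _)
      simpa [Set.Iio_add_one_eq_Iic] using hNmem (n + 1) le_add_self le_rfl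
    obtain ⟨k, hk0, hkN, hks⟩ := ih (fun i h1 h2 => hNpos i h1 (by omega))
      (fun i h1 h2 => hNmem i h1 (by omega)) hlow
    refine ⟨Function.update k (n + 1) (c % N (n + 1)), fun j hj => ?_, fun i h1 h2 => ?_, ?_⟩
    · rw [Function.update_of_ne (by omega)]
      exact hk0 j (by omega)
    · rcases (by omega : i ≤ n ∨ i = n + 1) with hi | rfl
      · rw [Function.update_of_ne (by omega)]
        exact hkN i h1 hi
      · rw [Function.update_self]
        exact Nat.mod_lt _ hN
    · rw [sum_range_succ, Function.update_self,
        sum_congr rfl fun j hj => by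
          rw [Function.update_of_ne (by have := mem_range.1 hj; omega)],
        ← hks]
      have := Nat.div_add_mod c (N (n + 1))
      nlinarith

end

theorem unique_representation_in_semigroup_general
    (g : ℕ) (m : ℕ → ℕ) (hm : ∀ i ≤ g, 0 < m i)
    (e : ℕ → ℕ) (he : ∀ i, e i = (Finset.range (i + 1)).gcd m)
    (N : ℕ → ℕ) (hN : ∀ i, 1 ≤ i → N i = e (i - 1) / e i)
    (hNmem : ∀ i, 1 ≤ i → i ≤ g →
      N i * m i ∈ AddSubmonoid.closure (m '' Set.Iio i))
    (a : ℕ) (ha : a ∈ AddSubmonoid.closure (m '' Set.Iic g)) :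
    ∃! k : ℕ → ℕ,
      (∀ j, g < j → k j = 0) ∧
      (∀ i, 1 ≤ i → i ≤ g → k i < N i) ∧
      a = ∑ j ∈ Finset.range (g + 1), k j * m j := by
  have hm0 : 0 < m 0 := hm 0 g.zero_le
  obtain rfl : e = partialGcd m := funext he
  have hN' (i : ℕ) : N (i + 1) = partialGcd m i / partialGcd m (i + 1) := by
    simpa using hN (i + 1) le_add_self
  have hNpos (i : ℕ) (hi : 1 ≤ i) (_ : i ≤ g) : 0 < N i := by
    obtain ⟨i, rfl⟩ := Nat.exists_eq_add_of_le' hi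
    exact hN' i ▸ partialGcd_div_succ_pos hm0 i
  obtain ⟨k, hk⟩ := exists_repr_of_mul_mem_closure hNpos hNmem ha
  refine ⟨k, hk, fun k' ⟨hk'0, hk'N, hk's⟩ => funext fun j => ?_⟩
  rcases le_or_gt j g with hj | hj
  · exact eq_of_sum_mul_eq_sum_mul hm0 hN' hk'N hk.2.1 (hk's ▸ hk.2.2) j hj
  · rw [hk'0 j hj, hk.1 j hj]

/-- unique representation of elements of the semigroup
`S = ⟨m_0, …, m_g⟩` in the form `∑ k_i m_i` with `0 ≤ k_i < N_i` for `1 ≤ i ≤ g`. -/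
theorem unique_representation_in_semigroup
    (g : ℕ) (m : ℕ → ℕ) (hm : ∀ i ≤ g, 0 < m i)
    (e : ℕ → ℕ) (he : ∀ i, e i = (Finset.range (i + 1)).gcd m)
    (N : ℕ → ℕ) (hN : ∀ i, 1 ≤ i → N i = e (i - 1) / e i)
    (hNmem : ∀ i, 1 ≤ i → i ≤ g →
      N i * m i ∈ AddSubmonoid.closure (m '' Set.Iio i))
    (hNlt : ∀ i, 1 ≤ i → i ≤ g - 1 → N i * m i < m (i + 1))
    (a : ℕ) (ha : a ∈ AddSubmonoid.closure (m '' Set.Iic g)) :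
    ∃! k : ℕ → ℕ,
      (∀ j, g < j → k j = 0) ∧
      (∀ i, 1 ≤ i → i ≤ g → k i < N i) ∧
      a = ∑ j ∈ Finset.range (g + 1), k j * m j :=
  unique_representation_in_semigroup_general g m hm e he N hN hNmem a ha
end

section
/- Let m_0, m_1, …, m_g be positive integers, let e_i = gcd(m_0, …, m_i) for 0 ≤ i ≤ g and N_i = e_{i-1}/e_i for 1 ≤ i ≤ g, and let S = ⟨m_0, …, m_g⟩ be the additive submonoid of the nonnegative integers generated by m_0, …, m_g. Assume that N_i·m_i ∈ ⟨m_0, …, m_{i-1}⟩ for all 1 ≤ i ≤ g and that N_i·m_i < m_{i+1} for all 1 ≤ i ≤ g−1. Then in the ring ℤ⟦t⟧ of formal power series with integer coefficients one has the identity (Σ_{a ∈ S} t^a) · Π_{i=0}^{g} (1 − t^{m_i}) = Π_{i=1}^{g} (1 − t^{N_i·m_i}). -/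
open scoped Classical

open PowerSeries

/-! With `S_k = ⟨m_0, …, m_k⟩`, every element of `S_{k+1}` is uniquely `s + c m_{k+1}` with
`s ∈ S_k` and `0 ≤ c < N_{k+1}`: such a representation exists because `N_{k+1} m_{k+1} ∈ S_k`,
and it is unique because `e_k` divides every element of `S_k` while
`N_{k+1} = e_k / gcd(e_k, m_{k+1})` is the order of `m_{k+1}` modulo `e_k`. Hence the Poincaré
series of `S_{k+1}` is that of `S_k` times `1 + t^{m_{k+1}} + ⋯ + t^{(N_{k+1} - 1) m_{k+1}}`, and
multiplying by `1 - t^{m_{k+1}}` turns this geometric sum into `1 - t^{N_{k+1} m_{k+1}}`.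
Induct on `k`, starting from `(Σ_{a ∈ m_0 ℕ} t^a) (1 - t^{m_0}) = 1`. -/

theorem Nat.eq_of_add_mul_eq_add_mul {d M s s' c c' : ℕ} (hd : 0 < d) (hs : d ∣ s)
    (hs' : d ∣ s') (hc : c < d / d.gcd M) (hc' : c' < d / d.gcd M)
    (h : s + c * M = s' + c' * M) : c = c' := by
  have hss' : s ≡ s' [MOD d] :=
    (Nat.modEq_zero_iff_dvd.mpr hs).trans (Nat.modEq_zero_iff_dvd.mpr hs').symm
  exact ((hss'.add_left_cancel (h ▸ rfl)).cancel_right_div_gcd hd).eq_of_lt_of_lt hc hc'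

namespace AddSubmonoid

theorem dvd_of_mem_closure_image {α ι : Type*} [Semiring α] {f : ι → α} {s : Set ι}
    {d a : α} (hd : ∀ i ∈ s, d ∣ f i) (ha : a ∈ closure (f '' s)) : d ∣ a := by
  induction ha using closure_induction with
  | mem x hx => obtain ⟨i, hi, rfl⟩ := hx; exact hd i hi
  | zero => exact dvd_zero d
  | add x y _ _ hx hy => exact dvd_add hx hy

theorem closure_image_Iic_add_one {A : Type*} [AddMonoid A] (f : ℕ → A) (k : ℕ) :
    closure (f '' Set.Iic (k + 1)) = closure (f '' Set.Iic k) ⊔ closure {f (k + 1)} := by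
  rw [← closure_union, ← Set.image_singleton, ← Set.image_union]
  congr 2
  ext i
  simp only [Set.mem_Iic, Set.mem_union, Set.mem_singleton_iff]
  omega

theorem coe_sup_closure_singleton_eq_biUnion {S : AddSubmonoid ℕ} {M n : ℕ} (hn : 0 < n)
    (hnM : n * M ∈ S) :
    ((S ⊔ closure {M} : AddSubmonoid ℕ) : Set ℕ) =
      ⋃ c ∈ Finset.range n, (· + c * M) '' S := by
  ext a
  simp only [SetLike.mem_coe, mem_sup, mem_closure_singleton, Set.mem_iUnion, Set.mem_image,
    Finset.mem_range, smul_eq_mul, exists_prop]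
  constructor
  · rintro ⟨s, hs, _, ⟨j, rfl⟩, rfl⟩
    refine ⟨j % n, Nat.mod_lt _ hn, s + j / n * (n * M), add_mem hs ?_, ?_⟩
    · simpa using nsmul_mem hnM (j / n)
    · nth_rw 3 [← Nat.div_add_mod j n]
      ring
  · rintro ⟨c, -, s, hs, rfl⟩
    exact ⟨s, hs, c * M, ⟨c, rfl⟩, rfl⟩

end AddSubmonoid

theorem pairwiseDisjoint_image_add_mul {S : Set ℕ} {d M : ℕ} (hd : 0 < d)
    (hS : ∀ s ∈ S, d ∣ s) :
    ((Finset.range (d / d.gcd M) : Set ℕ)).PairwiseDisjoint fun c => (· + c * M) '' S := by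
  intro c hc c' hc' hne
  simp only [Finset.coe_range, Set.mem_Iio] at hc hc'
  refine Set.disjoint_left.mpr ?_
  rintro _ ⟨s, hs, rfl⟩ ⟨s', hs', h⟩
  exact hne (Nat.eq_of_add_mul_eq_add_mul hd (hS s hs) (hS s' hs') hc hc' h.symm)

noncomputable def indicatorSeries (R : Type*) [Semiring R] (S : Set ℕ) : R⟦X⟧ :=
  mk (S.indicator 1)

section Semiring

variable {R : Type*} [Semiring R]

theorem coeff_indicatorSeries (S : Set ℕ) (a : ℕ) :
    coeff a (indicatorSeries R S) = S.indicator 1 a :=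
  coeff_mk _ _

theorem indicatorSeries_image_add_right (S : Set ℕ) (k : ℕ) :
    indicatorSeries R ((· + k) '' S) = X ^ k * indicatorSeries R S := by
  ext a
  rw [coeff_X_pow_mul', coeff_indicatorSeries]
  split_ifs with hka
  · obtain ⟨b, rfl⟩ := Nat.exists_eq_add_of_le' hka
    have hmem : b + k ∈ (· + k) '' S ↔ b ∈ S := (add_left_injective k).mem_set_image
    simp only [coeff_indicatorSeries, Nat.add_sub_cancel, Set.indicator_apply, hmem, Pi.one_apply]
  · exact Set.indicator_of_notMem (by rintro ⟨s, -, rfl⟩; exact hka (Nat.le_add_left k s)) _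

theorem indicatorSeries_biUnion {ι : Type*} (s : Finset ι) {f : ι → Set ℕ}
    (hf : (s : Set ι).PairwiseDisjoint f) :
    indicatorSeries R (⋃ i ∈ s, f i) = ∑ i ∈ s, indicatorSeries R (f i) := by
  ext a
  simp only [coeff_indicatorSeries, map_sum, Finset.indicator_biUnion_apply s f hf]

end Semiring

section CommRing

variable {R : Type*} [CommRing R]

theorem indicatorSeries_closure_singleton_mul {M : ℕ} (hM : 0 < M) :
    indicatorSeries R (AddSubmonoid.closure {M} : Set ℕ) * (1 - X ^ M) = 1 := by
  ext a
  rw [mul_sub, mul_one, map_sub, mul_comm, coeff_X_pow_mul', coeff_indicatorSeries, coeff_one]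
  have hmem : ∀ b, b ∈ AddSubmonoid.closure {M} ↔ M ∣ b := fun b => by
    simp [AddSubmonoid.mem_closure_singleton, dvd_iff_exists_eq_mul_left, eq_comm]
  simp only [coeff_indicatorSeries, Set.indicator_apply, SetLike.mem_coe, hmem, Pi.one_apply]
  rcases Nat.lt_or_ge a M with haM | haM
  · rcases Nat.eq_zero_or_pos a with rfl | ha
    · simp [hM.ne']
    · simp [Nat.not_dvd_of_pos_of_lt ha haM, haM.not_ge, ha.ne']
  · obtain ⟨b, rfl⟩ := Nat.exists_eq_add_of_le haM
    simp [hM.ne']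

theorem indicatorSeries_sup_closure_singleton_mul {S : AddSubmonoid ℕ} {d M : ℕ} (hd : 0 < d)
    (hS : ∀ s ∈ S, d ∣ s) (hM : d / d.gcd M * M ∈ S) :
    indicatorSeries R (S ⊔ AddSubmonoid.closure {M} : AddSubmonoid ℕ) * (1 - X ^ M) =
      indicatorSeries R S * (1 - X ^ (d / d.gcd M * M)) := by
  rw [AddSubmonoid.coe_sup_closure_singleton_eq_biUnion (Nat.div_gcd_pos_of_pos_left M hd) hM,
    indicatorSeries_biUnion _ (pairwiseDisjoint_image_add_mul hd hS)]
  simp_rw [indicatorSeries_image_add_right, mul_comm _ M, pow_mul, ← Finset.sum_mul]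
  rw [mul_right_comm, geom_sum_mul_neg, mul_comm, ← pow_mul, mul_comm M]

end CommRing

open PowerSeries in
theorem semigroup_poincare_series_cyclotomic_general
    (g : ℕ) (m : ℕ → ℕ) (hm : ∀ i ≤ g, 0 < m i)
    (e : ℕ → ℕ) (he : ∀ i, e i = (Finset.range (i + 1)).gcd m)
    (N : ℕ → ℕ) (hN : ∀ i, 1 ≤ i → N i = e (i - 1) / e i)
    (hNmem : ∀ i, 1 ≤ i → i ≤ g →
      N i * m i ∈ AddSubmonoid.closure (m '' Set.Iio i)) :
    (PowerSeries.mk fun a : ℕ =>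
        if a ∈ AddSubmonoid.closure (m '' Set.Iic g) then (1 : ℤ) else 0) *
      ∏ i ∈ Finset.range (g + 1), (1 - (X : ℤ⟦X⟧) ^ m i) =
    ∏ i ∈ Finset.Icc 1 g, (1 - (X : ℤ⟦X⟧) ^ (N i * m i)) := by
  change indicatorSeries ℤ (AddSubmonoid.closure (m '' Set.Iic g) : Set ℕ) * _ = _
  induction g with
  | zero =>
    rw [show Set.Iic 0 = {0} from Set.Iic_bot, Set.image_singleton, Finset.prod_range_one,
      Finset.Icc_eq_empty (by omega), Finset.prod_empty]
    exact indicatorSeries_closure_singleton_mul (hm 0 le_rfl)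
  | succ k ih =>
    have he_pos : 0 < e k :=
      Nat.pos_of_dvd_of_pos (he k ▸ Finset.gcd_dvd (by simp)) (hm 0 (by omega))
    have hS : ∀ s ∈ AddSubmonoid.closure (m '' Set.Iic k), e k ∣ s := fun s =>
      AddSubmonoid.dvd_of_mem_closure_image fun i hi =>
        he k ▸ Finset.gcd_dvd (Finset.mem_range_succ_iff.mpr hi)
    have hNk : N (k + 1) = e k / (e k).gcd (m (k + 1)) := by
      rw [hN _ le_add_self, he (k + 1), Finset.range_add_one, Finset.gcd_insert, ← he k,
        Nat.add_sub_cancel, Nat.gcd_comm]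
      rfl
    have hmem : N (k + 1) * m (k + 1) ∈ AddSubmonoid.closure (m '' Set.Iic k) := by
      simpa only [Set.Iio_add_one_eq_Iic] using hNmem (k + 1) le_add_self le_rfl
    have step := indicatorSeries_sup_closure_singleton_mul (R := ℤ) he_pos hS (hNk ▸ hmem)
    rw [← hNk] at step
    rw [AddSubmonoid.closure_image_Iic_add_one, Finset.prod_range_succ,
      Finset.prod_Icc_succ_top (by omega), ← ih (fun i hi => hm i (by omega))
        (fun i h1 h2 => hNmem i h1 (by omega)), mul_right_comm, ← step]
    ring

open PowerSeries in
/-- the semigroup Poincaré series of `S = ⟨m_0, …, m_g⟩` satisfies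
`(Σ_{a ∈ S} t^a) · Π_{i=0}^{g} (1 − t^{m_i}) = Π_{i=1}^{g} (1 − t^{N_i m_i})`. -/
theorem semigroup_poincare_series_cyclotomic
    (g : ℕ) (m : ℕ → ℕ) (hm : ∀ i ≤ g, 0 < m i)
    (e : ℕ → ℕ) (he : ∀ i, e i = (Finset.range (i + 1)).gcd m)
    (N : ℕ → ℕ) (hN : ∀ i, 1 ≤ i → N i = e (i - 1) / e i)
    (hNmem : ∀ i, 1 ≤ i → i ≤ g →
      N i * m i ∈ AddSubmonoid.closure (m '' Set.Iio i))
    (hNlt : ∀ i, 1 ≤ i → i ≤ g - 1 → N i * m i < m (i + 1)) :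
    (PowerSeries.mk fun a : ℕ =>
        if a ∈ AddSubmonoid.closure (m '' Set.Iic g) then (1 : ℤ) else 0) *
      ∏ i ∈ Finset.range (g + 1), (1 - (X : ℤ⟦X⟧) ^ m i) =
    ∏ i ∈ Finset.Icc 1 g, (1 - (X : ℤ⟦X⟧) ^ (N i * m i)) :=
  semigroup_poincare_series_cyclotomic_general g m hm e he N hN hNmem
end

section
/- Let m_0, m_1, …, m_g be positive integers, let e_i = gcd(m_0, …, m_i) for 0 ≤ i ≤ g and N_i = e_{i-1}/e_i for 1 ≤ i ≤ g. Assume m_0 < m_1, N_i ≥ 2 for all 1 ≤ i ≤ g, N_i·m_i ∈ ⟨m_0, …, m_{i-1}⟩ for all 1 ≤ i ≤ g, and N_i·m_i < m_{i+1} for all 1 ≤ i ≤ g−1. Then for every 1 ≤ i ≤ g one has (N_i − 1)·m_i ∉ ⟨m_0, …, m_{i-1}⟩ and m_i ∉ ⟨m_0, …, m_{i-1}⟩; moreover {m_0, m_1, …, m_g} is a minimal generating set of the submonoid S = ⟨m_0, …, m_g⟩, i.e., for every index j, m_j does not belong to the submonoid generated by {m_i : i ≠ j}. -/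
/-!
Every element of `⟨m_0, …, m_{i-1}⟩` is a multiple of `e_{i-1} = N_i e_i`, while
`gcd(m_i, e_{i-1}) = e_i`; so `k m_i ∈ ⟨m_0, …, m_{i-1}⟩` forces `N_i ∣ k`, which rules out
`0 < k < N_i`, in particular `k = 1` and `k = N_i - 1`.
For minimality, `m_0 < m_1 < N_1 m_1 < m_2 < N_2 m_2 < ⋯` makes `m` strictly increasing, and a sum
of generators equal to `m_j` only involves generators `≤ m_j`, i.e. those of index `< j`.
-/

open Set

theorem Nat.div_gcd_dvd_of_dvd_mul {a b k : ℕ} (hb : 0 < b) (h : b ∣ k * a) :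
    b / a.gcd b ∣ k := by
  have hg : 0 < a.gcd b := Nat.gcd_pos_of_pos_right a hb
  refine (Nat.coprime_div_gcd_div_gcd hg).symm.dvd_of_dvd_mul_right ?_
  refine Nat.dvd_of_mul_dvd_mul_right hg ?_
  rwa [Nat.div_mul_cancel (Nat.gcd_dvd_right a b), mul_assoc,
    Nat.div_mul_cancel (Nat.gcd_dvd_left a b)]

namespace AddSubmonoid

theorem dvd_of_mem_closure {α : Type*} [Semiring α] {s : Set α} {d x : α}
    (hs : ∀ y ∈ s, d ∣ y) (hx : x ∈ closure s) : d ∣ x := by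
  induction hx using closure_induction with
  | mem y hy => exact hs y hy
  | zero => exact dvd_zero d
  | add _ _ _ _ hx hy => exact dvd_add hx hy

theorem mem_closure_inter_Iic {M : Type*} [AddCommMonoid M] [PartialOrder M]
    [CanonicallyOrderedAdd M] {s : Set M} {x : M} (hx : x ∈ closure s) :
    x ∈ closure (s ∩ Iic x) := by
  induction hx using closure_induction with
  | mem y hy => exact subset_closure ⟨hy, le_rfl⟩
  | zero => exact zero_mem _
  | add x y _ _ hx hy =>
    exact add_mem (closure_mono (inter_subset_inter_right s (Iic_subset_Iic.2 le_self_add)) hx)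
      (closure_mono (inter_subset_inter_right s (Iic_subset_Iic.2 le_add_self)) hy)

end AddSubmonoid

theorem StrictMonoOn.mem_closure_image_Iio {ι M : Type*} [LinearOrder ι] [AddCommMonoid M]
    [LinearOrder M] [CanonicallyOrderedAdd M] {m : ι → M} {s : Set ι} {j : ι}
    (hm : StrictMonoOn m s) (hj : j ∈ s) (h : m j ∈ AddSubmonoid.closure (m '' (s \ {j}))) :
    m j ∈ AddSubmonoid.closure (m '' Iio j) := by
  refine AddSubmonoid.closure_mono ?_ (AddSubmonoid.mem_closure_inter_Iic h)
  rintro _ ⟨⟨k, ⟨hks, hkj⟩, rfl⟩, hle⟩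
  exact ⟨k, lt_of_le_of_ne ((hm.le_iff_le hks hj).1 hle) hkj, rfl⟩

theorem gcd_range_dvd_of_mem_closure {m : ℕ → ℕ} {i x : ℕ}
    (hx : x ∈ AddSubmonoid.closure (m '' Iio i)) : (Finset.range i).gcd m ∣ x :=
  AddSubmonoid.dvd_of_mem_closure
    (by rintro _ ⟨k, hk, rfl⟩; exact Finset.gcd_dvd (Finset.mem_range.2 hk)) hx

theorem mul_notMem_closure_image_Iio {m : ℕ → ℕ} {i k : ℕ} (hm0 : 0 < m 0) (hi : 0 < i)
    (hk : 0 < k) (hkN : k < (Finset.range i).gcd m / (Finset.range (i + 1)).gcd m) :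
    k * m i ∉ AddSubmonoid.closure (m '' Iio i) := by
  intro hmem
  have hpos : 0 < (Finset.range i).gcd m :=
    Nat.pos_of_dvd_of_pos (Finset.gcd_dvd (Finset.mem_range.2 hi)) hm0
  have hdvd := Nat.div_gcd_dvd_of_dvd_mul hpos (gcd_range_dvd_of_mem_closure hmem)
  rw [Finset.range_add_one, Finset.gcd_insert] at hkN
  exact absurd (Nat.le_of_dvd hk hdvd) (not_le.2 hkN)

theorem minimal_generating_set_general
    (g : ℕ) (m : ℕ → ℕ) (hm : ∀ i ≤ g, 0 < m i)
    (e : ℕ → ℕ) (he : ∀ i, e i = (Finset.range (i + 1)).gcd m)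
    (N : ℕ → ℕ) (hN : ∀ i, 1 ≤ i → N i = e (i - 1) / e i)
    (hm01 : m 0 < m 1)
    (hN2 : ∀ i, 1 ≤ i → i ≤ g → 2 ≤ N i)
    (hNlt : ∀ i, 1 ≤ i → i ≤ g - 1 → N i * m i < m (i + 1)) :
    (∀ i, 1 ≤ i → i ≤ g →
      (N i - 1) * m i ∉ AddSubmonoid.closure (m '' Set.Iio i) ∧
      m i ∉ AddSubmonoid.closure (m '' Set.Iio i)) ∧
    (∀ j ≤ g, m j ∉ AddSubmonoid.closure (m '' (Set.Iic g \ {j}))) := by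
  have hm0 : 0 < m 0 := hm 0 g.zero_le
  have hnotMem : ∀ i, 1 ≤ i → ∀ k, 0 < k → k < N i →
      k * m i ∉ AddSubmonoid.closure (m '' Iio i) := by
    intro i hi k hk hkN
    rw [hN i hi, he, he, Nat.sub_add_cancel hi] at hkN
    exact mul_notMem_closure_image_Iio hm0 hi hk hkN
  have hfirst : ∀ i, 1 ≤ i → i ≤ g →
      (N i - 1) * m i ∉ AddSubmonoid.closure (m '' Iio i) ∧
        m i ∉ AddSubmonoid.closure (m '' Iio i) := fun i hi hig =>
    have := hN2 i hi hig
    ⟨hnotMem i hi _ (by omega) (by omega), one_mul (m i) ▸ hnotMem i hi 1 one_pos (by omega)⟩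
  have hmono : StrictMonoOn m (Iic g) := by
    refine strictMonoOn_Iic_of_lt_succ fun k hk => ?_
    rw [Order.succ_eq_add_one]
    rcases k.eq_zero_or_pos with rfl | hk0
    · exact hm01
    · calc m k < N k * m k :=
            lt_mul_left (hm k hk.le) (by have := hN2 k hk0 hk.le; omega)
        _ < m (k + 1) := hNlt k hk0 (by omega)
  refine ⟨hfirst, fun j hj hmem => ?_⟩
  have hsmall := hmono.mem_closure_image_Iio (mem_Iic.2 hj) hmem
  rcases j.eq_zero_or_pos with rfl | hj0
  · exact hm0.ne' (by simpa using hsmall)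
  · exact (hfirst j hj0 hj).2 hsmall

/-- `(N_i − 1)·m_i` and `m_i` do not belong to `⟨m_0, …, m_{i-1}⟩`,
and `{m_0, …, m_g}` is a minimal generating set of `S = ⟨m_0, …, m_g⟩`. -/
theorem minimal_generating_set
    (g : ℕ) (m : ℕ → ℕ) (hm : ∀ i ≤ g, 0 < m i)
    (e : ℕ → ℕ) (he : ∀ i, e i = (Finset.range (i + 1)).gcd m)
    (N : ℕ → ℕ) (hN : ∀ i, 1 ≤ i → N i = e (i - 1) / e i)
    (hm01 : m 0 < m 1)
    (hN2 : ∀ i, 1 ≤ i → i ≤ g → 2 ≤ N i)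
    (hNmem : ∀ i, 1 ≤ i → i ≤ g →
      N i * m i ∈ AddSubmonoid.closure (m '' Set.Iio i))
    (hNlt : ∀ i, 1 ≤ i → i ≤ g - 1 → N i * m i < m (i + 1)) :
    (∀ i, 1 ≤ i → i ≤ g →
      (N i - 1) * m i ∉ AddSubmonoid.closure (m '' Set.Iio i) ∧
      m i ∉ AddSubmonoid.closure (m '' Set.Iio i)) ∧
    (∀ j ≤ g, m j ∉ AddSubmonoid.closure (m '' (Set.Iic g \ {j}))) :=
  minimal_generating_set_general g m hm e he N hN hm01 hN2 hNlt
end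

section
/- Let x(t), y(t) ∈ ℂ⟦t⟧ be formal power series with zero constant term. For every nonnegative integer a, the quotient vector space J(a)/J(a+1) has dimension at most 2 over ℝ. -/
open PowerSeries

/-- The substitution `f(x(t), y(t))` of two one-variable complex power series with
zero constant term into a two-variable real power series `f`, defined
coefficient-wise: the terms of `f` of total degree `> n` do not contribute to the
`n`-th coefficient since `x` and `y` have zero constant term. -/
noncomputable def substXY (x y : PowerSeries ℂ) (f : MvPowerSeries (Fin 2) ℝ) :
    PowerSeries ℂ :=
  PowerSeries.mk fun n =>
    ∑ p ∈ Finset.range (n + 1) ×ˢ Finset.range (n + 1),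
      ((MvPowerSeries.coeff (Finsupp.single 0 p.1 + Finsupp.single 1 p.2) f : ℝ) : ℂ) *
        PowerSeries.coeff n (x ^ p.1 * y ^ p.2)

/-- The order function `ν(f) := ord_t f(x(t), y(t)) ∈ ℤ_{≥0} ∪ {∞}`. -/
noncomputable def nuXY (x y : PowerSeries ℂ) (f : MvPowerSeries (Fin 2) ℝ) : ℕ∞ :=
  (substXY x y f).order

/-- The `ℝ`-subspace `J(a) = {f ∈ ℝ⟦X,Y⟧ : ν(f) ≥ a}` of `ℝ⟦X,Y⟧`. -/
noncomputable def JXY (x y : PowerSeries ℂ) (a : ℕ) :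
    Submodule ℝ (MvPowerSeries (Fin 2) ℝ) where
  carrier := {f | (a : ℕ∞) ≤ nuXY x y f}
  zero_mem' := by
    have : substXY x y 0 = 0 := by
      ext n
      simp [substXY]
    simp [Set.mem_setOf_eq, nuXY, this, PowerSeries.order_zero]
  add_mem' := by
    intro f g hf hg
    have hadd : substXY x y (f + g) = substXY x y f + substXY x y g := by
      ext n
      simp [substXY, map_add, add_mul, Finset.sum_add_distrib]
    have := PowerSeries.min_order_le_order_add (substXY x y f) (substXY x y g)
    simp only [Set.mem_setOf_eq, nuXY] at *
    rw [hadd]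
    exact le_trans (le_min hf hg) this
  smul_mem' := by
    intro r f hf
    have hsmul : substXY x y (r • f) = (r : ℂ) • substXY x y f := by
      ext n
      simp [substXY, Finset.smul_sum, mul_assoc]
    simp only [Set.mem_setOf_eq, nuXY] at *
    rw [hsmul]
    apply PowerSeries.le_order
    intro i hi
    have := PowerSeries.coeff_of_lt_order i (lt_of_lt_of_le hi hf)
    simp [this]

/-- The quotient `J(a)/J(a+1)` as an `ℝ`-module. -/
noncomputable abbrev JQuot (x y : PowerSeries ℂ) (a : ℕ) :=
  (JXY x y a) ⧸ (Submodule.comap (JXY x y a).subtype (JXY x y (a + 1)))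

/-! On `J(a)`, the coefficient of `t ^ a` in `f(x(t), y(t))` is an `ℝ`-linear map to `ℂ` whose
kernel is `J(a + 1)`, so `J(a)/J(a + 1)` embeds into `ℂ ≅ ℝ²`. -/

theorem PowerSeries.natCast_succ_le_order_iff {R : Type*} [Semiring R] {φ : R⟦X⟧} {n : ℕ}
    (hn : (n : ℕ∞) ≤ φ.order) : ((n + 1 : ℕ) : ℕ∞) ≤ φ.order ↔ coeff n φ = 0 := by
  constructor
  · intro h
    exact coeff_of_lt_order n (lt_of_lt_of_le (by exact_mod_cast n.lt_succ_self) h)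
  · intro h
    refine nat_le_order φ (n + 1) fun i hi => ?_
    rcases Nat.lt_succ_iff_lt_or_eq.mp hi with hi | rfl
    · exact coeff_of_lt_order i (lt_of_lt_of_le (by exact_mod_cast hi) hn)
    · exact h

noncomputable def substXYLinearMap (x y : PowerSeries ℂ) :
    MvPowerSeries (Fin 2) ℝ →ₗ[ℝ] PowerSeries ℂ where
  toFun := substXY x y
  map_add' f g := by
    ext n
    simp [substXY, add_mul, Finset.sum_add_distrib]
  map_smul' r f := by
    ext n
    simp [substXY, Finset.mul_sum, Complex.real_smul, mul_assoc]

theorem mem_JXY {x y : PowerSeries ℂ} {a : ℕ} {f : MvPowerSeries (Fin 2) ℝ} :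
    f ∈ JXY x y a ↔ (a : ℕ∞) ≤ (substXY x y f).order :=
  Iff.rfl

noncomputable def leadingCoeffJXY (x y : PowerSeries ℂ) (a : ℕ) : JXY x y a →ₗ[ℝ] ℂ :=
  (coeff a).restrictScalars ℝ ∘ₗ substXYLinearMap x y ∘ₗ (JXY x y a).subtype

theorem ker_leadingCoeffJXY (x y : PowerSeries ℂ) (a : ℕ) :
    LinearMap.ker (leadingCoeffJXY x y a) =
      Submodule.comap (JXY x y a).subtype (JXY x y (a + 1)) := by
  ext f
  rw [Submodule.mem_comap, Submodule.subtype_apply, mem_JXY,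
    PowerSeries.natCast_succ_le_order_iff (mem_JXY.mp f.2)]
  rfl

theorem rank_JQuot_le_two_general (x y : PowerSeries ℂ)
    (a : ℕ) :
    Module.rank ℝ (JQuot x y a) ≤ 2 := by
  let e : JQuot x y a ≃ₗ[ℝ] LinearMap.range (leadingCoeffJXY x y a) :=
    (Submodule.quotEquivOfEq _ _ (ker_leadingCoeffJXY x y a).symm).trans
      (leadingCoeffJXY x y a).quotKerEquivRange
  calc Module.rank ℝ (JQuot x y a) = Module.rank ℝ (LinearMap.range (leadingCoeffJXY x y a)) :=
        e.rank_eq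
    _ ≤ Module.rank ℝ ℂ := Submodule.rank_le _
    _ = 2 := Complex.rank_real_complex

/-- each quotient `J(a)/J(a+1)` has `ℝ`-dimension at most `2`. -/
theorem rank_JQuot_le_two (x y : PowerSeries ℂ)
    (hx : PowerSeries.constantCoeff x = 0) (hy : PowerSeries.constantCoeff y = 0)
    (a : ℕ) :
    Module.rank ℝ (JQuot x y a) ≤ 2 :=
  rank_JQuot_le_two_general x y a
end

section
/- Let α ∈ ℂ with Im α ≠ 0, and set x(t) = t^4 and y(t) = t^6 + α·t^7 in ℂ⟦t⟧. Then the set of values { ν(f) : f ∈ ℝ⟦X,Y⟧ with f(x(t), y(t)) ≠ 0 } equals the additive submonoid of ℤ_{≥0} generated by 4, 6 and 13. -/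
open PowerSeries

theorem AddSubmonoid.mem_closure_triple {A : Type*} [AddCommMonoid A] (a b c x : A) :
    x ∈ closure ({a, b, c} : Set A) ↔ ∃ k l m : ℕ, k • a + l • b + m • c = x := by
  rw [← Set.singleton_union, closure_union, mem_sup]
  simp_rw [mem_closure_singleton, mem_closure_pair]
  constructor
  · rintro ⟨_, ⟨k, rfl⟩, _, ⟨l, m, rfl⟩, rfl⟩
    exact ⟨k, l, m, add_assoc _ _ _⟩
  · rintro ⟨k, l, m, rfl⟩
    exact ⟨_, ⟨k, rfl⟩, _, ⟨l, m, rfl⟩, (add_assoc _ _ _).symm⟩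

theorem PowerSeries.order_X_pow_mul_of_constantCoeff_ne_zero {R : Type*} [Semiring R]
    [Nontrivial R] [NoZeroDivisors R] {u : R⟦X⟧} (hu : constantCoeff u ≠ 0) (n : ℕ) :
    (X ^ n * u).order = (n : ℕ∞) := by
  rw [order_mul, order_X_pow, not_imp_comm.mp order_ne_zero_iff_constCoeff_eq_zero.mp hu,
    add_zero]

theorem Finsupp.single_zero_add_single_one_eq_iff (s : Fin 2 →₀ ℕ) (p q : ℕ) :
    Finsupp.single 0 p + Finsupp.single 1 q = s ↔ p = s 0 ∧ q = s 1 := by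
  constructor
  · rintro rfl
    simp
  · rintro ⟨rfl, rfl⟩
    ext i
    fin_cases i <;> simp

section Substitution

variable {x y : ℂ⟦X⟧}

theorem substXY_add (f g : MvPowerSeries (Fin 2) ℝ) :
    substXY x y (f + g) = substXY x y f + substXY x y g := by
  ext n
  simp [substXY, add_mul, Finset.sum_add_distrib]

theorem coeff_pow_mul_pow_of_lt (hx : constantCoeff x = 0) (hy : constantCoeff y = 0)
    {m p q : ℕ} (h : m < p + q) : coeff m (x ^ p * y ^ q) = 0 := by
  obtain ⟨u, hu⟩ := pow_dvd_pow_of_dvd (X_dvd_iff.mpr hx) p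
  obtain ⟨v, hv⟩ := pow_dvd_pow_of_dvd (X_dvd_iff.mpr hy) q
  rw [hu, hv, mul_mul_mul_comm, ← pow_add, coeff_X_pow_mul', if_neg (not_le.mpr h)]

theorem substXY_monomial (hx : constantCoeff x = 0) (hy : constantCoeff y = 0)
    (s : Fin 2 →₀ ℕ) (r : ℝ) :
    substXY x y (MvPowerSeries.monomial s r) = C (r : ℂ) * (x ^ s 0 * y ^ s 1) := by
  ext m
  simp only [substXY, coeff_mk, coeff_C_mul, MvPowerSeries.coeff_monomial,
    Finsupp.single_zero_add_single_one_eq_iff]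
  rw [Finset.sum_eq_single (s 0, s 1)]
  · simp
  · rintro ⟨p, q⟩ - hpq
    rw [if_neg (by simpa [Prod.ext_iff] using hpq), Complex.ofReal_zero, zero_mul]
  · intro hs
    have : m < s 0 + s 1 := by
      simp only [Finset.mem_product, Finset.mem_range, not_and_or, not_lt] at hs
      omega
    simp [coeff_pow_mul_pow_of_lt hx hy this]

theorem substXY_coe_eq_eval₂ (hx : constantCoeff x = 0) (hy : constantCoeff y = 0)
    (g : MvPolynomial (Fin 2) ℝ) :
    substXY x y g = MvPolynomial.eval₂ (C.comp Complex.ofRealHom) ![x, y] g := by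
  induction g using MvPolynomial.induction_on' with
  | monomial s r =>
    simp [MvPolynomial.coe_monomial, substXY_monomial hx hy, MvPolynomial.eval₂_monomial,
      Finsupp.prod_fintype]
  | add g h hg hh => rw [MvPolynomial.coe_add, substXY_add, hg, hh, MvPolynomial.eval₂_add]

end Substitution

theorem PowerSeries.coeff_one_add_C_mul_X_pow {R : Type*} [CommRing R] (a : R) (q m : ℕ) :
    coeff m ((1 + C a * X) ^ q) = q.choose m * a ^ m := by
  have : (1 + C a * X : R⟦X⟧) ^ q =
      rescale a (((1 + Polynomial.X) ^ q : Polynomial R) : R⟦X⟧) := by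
    rw [Polynomial.coe_pow, Polynomial.coe_add, Polynomial.coe_one, Polynomial.coe_X, map_pow,
      map_add, map_one, rescale_X]
  rw [this, coeff_rescale, Polynomial.coeff_coe, Polynomial.coeff_one_add_X_pow, mul_comm]

section Curve

variable (α : ℂ)

local notation "φ" => substXY ((X : ℂ⟦X⟧) ^ 4) ((X : ℂ⟦X⟧) ^ 6 + C α * (X : ℂ⟦X⟧) ^ 7)

theorem coeff_curve_pow_mul_pow (p q m : ℕ) :
    coeff m (((X : ℂ⟦X⟧) ^ 4) ^ p * (X ^ 6 + C α * X ^ 7) ^ q) =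
      if 4 * p + 6 * q ≤ m then
        (q.choose (m - (4 * p + 6 * q)) : ℂ) * α ^ (m - (4 * p + 6 * q))
      else 0 := by
  have : ((X : ℂ⟦X⟧) ^ 4) ^ p * (X ^ 6 + C α * X ^ 7) ^ q =
      X ^ (4 * p + 6 * q) * (1 + C α * X) ^ q := by
    rw [show (X : ℂ⟦X⟧) ^ 6 + C α * X ^ 7 = X ^ 6 * (1 + C α * X) by ring, mul_pow, ← pow_mul,
      ← pow_mul, pow_add, mul_assoc]
  rw [this, coeff_X_pow_mul', coeff_one_add_C_mul_X_pow]

theorem coeff_substXY_curve_eq_zero (f : MvPowerSeries (Fin 2) ℝ) {n : ℕ}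
    (hn : n ∈ ({1, 2, 3, 5, 9} : Finset ℕ)) : coeff n (φ f) = 0 := by
  fin_cases hn <;>
    simp [substXY, coeff_curve_pow_mul_pow, Finset.sum_product, Finset.sum_range_succ, Nat.choose]

theorem coeff_seven_substXY_curve (f : MvPowerSeries (Fin 2) ℝ) :
    coeff 7 (φ f) = α * coeff 6 (φ f) := by
  simp [substXY, coeff_curve_pow_mul_pow, Finset.sum_product, Finset.sum_range_succ]
  ring

theorem coeff_eleven_substXY_curve (f : MvPowerSeries (Fin 2) ℝ) :
    coeff 11 (φ f) = α * coeff 10 (φ f) := by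
  simp [substXY, coeff_curve_pow_mul_pow, Finset.sum_product, Finset.sum_range_succ, Nat.choose]
  ring

theorem coeff_fifteen_substXY_curve (f : MvPowerSeries (Fin 2) ℝ) :
    coeff 15 (φ f) = α * coeff 14 (φ f) - α ^ 2 / 2 * coeff 13 (φ f) := by
  simp [substXY, coeff_curve_pow_mul_pow, Finset.sum_product, Finset.sum_range_succ, Nat.choose]
  ring

theorem order_substXY_curve_ne (f : MvPowerSeries (Fin 2) ℝ) {n : ℕ}
    (hn : n ∈ ({1, 2, 3, 5, 7, 9, 11, 15} : Finset ℕ)) : (φ f).order ≠ n := by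
  intro h
  obtain ⟨hcoeff, hlow⟩ := order_eq_nat.mp h
  apply hcoeff
  simp only [Finset.mem_insert, Finset.mem_singleton] at hn
  rcases hn with rfl | rfl | rfl | rfl | rfl | rfl | rfl | rfl
  any_goals (refine coeff_substXY_curve_eq_zero α f ?_; decide)
  · rw [coeff_seven_substXY_curve, hlow 6 (by norm_num), mul_zero]
  · rw [coeff_eleven_substXY_curve, hlow 10 (by norm_num), mul_zero]
  · rw [coeff_fifteen_substXY_curve, hlow 14 (by norm_num), hlow 13 (by norm_num)]
    ring

theorem substXY_curve_witness (a b c : ℕ) :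
    φ ((MvPolynomial.X 0 ^ a * MvPolynomial.X 1 ^ b *
        (MvPolynomial.X 1 ^ 2 - MvPolynomial.X 0 ^ 3) ^ c : MvPolynomial (Fin 2) ℝ)) =
      X ^ (4 * a + 6 * b + 13 * c) * ((1 + C α * X) ^ b * (2 * C α + C α ^ 2 * X) ^ c) := by
  have hy : (X : ℂ⟦X⟧) ^ 6 + C α * X ^ 7 = X ^ 6 * (1 + C α * X) := by ring
  have hyx : (X ^ 6 * (1 + C α * X)) ^ 2 - ((X : ℂ⟦X⟧) ^ 4) ^ 3 =
      X ^ 13 * (2 * C α + C α ^ 2 * X) := by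
    ring
  rw [substXY_coe_eq_eval₂ (by simp) (by simp)]
  simp only [MvPolynomial.eval₂_mul, MvPolynomial.eval₂_pow, MvPolynomial.eval₂_sub,
    MvPolynomial.eval₂_X, Matrix.cons_val_zero, Matrix.cons_val_one, hy, hyx]
  rw [mul_pow, mul_pow, ← pow_mul, ← pow_mul, ← pow_mul]
  ring

theorem order_substXY_curve_witness (hα : α ≠ 0) (a b c : ℕ) :
    (φ ((MvPolynomial.X 0 ^ a * MvPolynomial.X 1 ^ b *
        (MvPolynomial.X 1 ^ 2 - MvPolynomial.X 0 ^ 3) ^ c : MvPolynomial (Fin 2) ℝ))).order =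
      (4 * a + 6 * b + 13 * c : ℕ) := by
  rw [substXY_curve_witness, order_X_pow_mul_of_constantCoeff_ne_zero]
  simp [hα, map_ofNat]

end Curve

theorem mem_closure_four_six_thirteen_of_notMem {n : ℕ}
    (hn : n ∉ ({1, 2, 3, 5, 7, 9, 11, 15} : Finset ℕ)) :
    n ∈ AddSubmonoid.closure ({4, 6, 13} : Set ℕ) := by
  simp only [Finset.mem_insert, Finset.mem_singleton, not_or] at hn
  rw [AddSubmonoid.mem_closure_triple]
  simp only [smul_eq_mul]
  rcases (by omega : n % 4 = 0 ∨ n % 4 = 1 ∨ n % 4 = 2 ∨ n % 4 = 3) with h | h | h | h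
  · exact ⟨n / 4, 0, 0, by omega⟩
  · exact ⟨(n - 13) / 4, 0, 1, by omega⟩
  · exact ⟨(n - 6) / 4, 1, 0, by omega⟩
  · exact ⟨(n - 19) / 4, 1, 1, by omega⟩

/-- for `x = t^4`, `y = t^6 + α t^7` with `Im α ≠ 0`, the real
value semigroup is generated by `4, 6, 13`. -/
theorem real_semigroup_example_three (α : ℂ) (hα : α.im ≠ 0) :
    {n : ℕ | ∃ f : MvPowerSeries (Fin 2) ℝ,
        substXY ((X : ℂ⟦X⟧) ^ 4) ((X : ℂ⟦X⟧) ^ 6 + PowerSeries.C α * (X : ℂ⟦X⟧) ^ 7) f ≠ 0 ∧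
        (substXY ((X : ℂ⟦X⟧) ^ 4)
          ((X : ℂ⟦X⟧) ^ 6 + PowerSeries.C α * (X : ℂ⟦X⟧) ^ 7) f).order = (n : ℕ∞)} =
      ↑(AddSubmonoid.closure ({4, 6, 13} : Set ℕ)) := by
  ext n
  constructor
  · rintro ⟨f, -, hf⟩
    by_contra hn
    exact order_substXY_curve_ne α f
      (not_imp_comm.mp mem_closure_four_six_thirteen_of_notMem hn) hf
  · intro hn
    obtain ⟨a, b, c, rfl⟩ := (AddSubmonoid.mem_closure_triple 4 6 13 n).mp hn
    have hord := order_substXY_curve_witness α (fun h => hα (by simp [h])) a b c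
    refine ⟨_, fun h => ?_, hord.trans ?_⟩
    · rw [h, order_zero] at hord
      exact ENat.top_ne_natCast _ hord
    · simp only [smul_eq_mul, mul_comm]
end

section
/- Let α ∈ ℂ with Im(α²) ≠ 0, set x(t) = t^4 and y(t) = α·t^6 + t^7 in ℂ⟦t⟧, and let S be the additive submonoid of ℤ_{≥0} generated by 4, 6 and 25. Then for every nonnegative integer a, the ℝ-dimension of the quotient J(a)/J(a+1) equals [a ∈ S] + [a ≥ 12 and a − 12 ∈ S]. -/
/-!
`f ↦ coeff a (f(x(t), y(t)))` identifies `J(a)/J(a+1)` with a real subspace `W a` of `ℂ`, so its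
dimension is at most `2`. The monomial `X^i Y^j` puts `α^j` into `W (4i + 6j)`, and the real series
`X^i Y^j (Y² - α² X³)(Y² - ᾱ² X³)` puts `2α(α² - ᾱ²) α^j` into `W (25 + 4i + 6j)`. Since `α² ∉ ℝ`,
two such values with exponents `j` and `j + 2` span `W a` as soon as `a - 12 ∈ S`; this gives the
lower bound `[a ∈ S] + [a - 12 ∈ S] ≤ dim W a`, which is `2` for `a ≥ 40`. Below `40`, the first
`40` coefficients of `f(x(t), y(t))` only depend on the `40` monomials of weight `4i + 6j < 40`, so
`∑_{a < 40} dim W a ≤ 40`, which is also the sum of the lower bounds.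
-/

open PowerSeries

open Module

namespace PowerSeries

theorem natCast_le_order_iff {R : Type*} [Semiring R] {φ : R⟦X⟧} {a : ℕ} :
    (a : ℕ∞) ≤ φ.order ↔ ∀ i < a, coeff i φ = 0 :=
  ⟨fun h i hi => coeff_of_lt_order i ((ENat.natCast_lt_natCast.mpr hi).trans_le h),
    nat_le_order φ a⟩

section OrderFiltration

variable {K A V : Type*} [Field K] [CommRing A] [Algebra K A] [AddCommGroup V] [Module K V]
  (Φ : V →ₗ[K] A⟦X⟧)

def orderFiltration (a : ℕ) : Submodule K V where
  carrier := {v | (a : ℕ∞) ≤ (Φ v).order}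
  zero_mem' := by simp
  add_mem' {v w} hv hw := by
    simp only [Set.mem_ofPred_eq, map_add] at *
    exact (le_min hv hw).trans (min_order_le_order_add _ _)
  smul_mem' c v hv := by
    simp only [Set.mem_ofPred_eq, map_smul, ← algebraMap_smul A c (Φ v)] at *
    exact hv.trans le_order_smul

noncomputable def gradedPiece (a : ℕ) : Submodule K A :=
  (orderFiltration Φ a).map ((coeff a).restrictScalars K ∘ₗ Φ)

variable {Φ}

theorem mem_orderFiltration_iff {a : ℕ} {v : V} :
    v ∈ orderFiltration Φ a ↔ ∀ i < a, coeff i (Φ v) = 0 :=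
  natCast_le_order_iff

theorem orderFiltration_antitone : Antitone (orderFiltration Φ) := fun _ _ hab _ hv =>
  mem_orderFiltration_iff.mpr fun i hi => mem_orderFiltration_iff.mp hv i (hi.trans_le hab)

theorem orderFiltration_zero : orderFiltration Φ 0 = ⊤ := by
  ext v; simp [mem_orderFiltration_iff]

theorem mem_orderFiltration_succ_iff {a : ℕ} {v : V} (hv : v ∈ orderFiltration Φ a) :
    v ∈ orderFiltration Φ (a + 1) ↔ coeff a (Φ v) = 0 := by
  rw [mem_orderFiltration_iff] at hv ⊢
  simp only [Nat.lt_succ_iff_lt_or_eq, or_imp, forall_and, forall_eq]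
  exact and_iff_right hv

variable (Φ)

noncomputable def orderFiltrationQuotEquiv (a : ℕ) :
    (orderFiltration Φ a ⧸ (orderFiltration Φ (a + 1)).comap (orderFiltration Φ a).subtype)
      ≃ₗ[K] gradedPiece Φ a :=
  let f := ((coeff a).restrictScalars K ∘ₗ Φ) ∘ₗ (orderFiltration Φ a).subtype
  have hker :
      LinearMap.ker f = (orderFiltration Φ (a + 1)).comap (orderFiltration Φ a).subtype := by
    ext v; exact (mem_orderFiltration_succ_iff v.2).symm
  have hrange : LinearMap.range f = gradedPiece Φ a := by
    rw [gradedPiece, LinearMap.range_comp, Submodule.range_subtype]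
  (Submodule.quotEquivOfEq _ _ hker.symm).trans
    (f.quotKerEquivRange.trans (LinearEquiv.ofEq _ _ hrange))

theorem finrank_orderFiltration_eq [FiniteDimensional K V] (a : ℕ) :
    finrank K (orderFiltration Φ a) =
      finrank K (gradedPiece Φ a) + finrank K (orderFiltration Φ (a + 1)) := by
  rw [← (orderFiltrationQuotEquiv Φ a).finrank_eq,
    ← (Submodule.comapSubtypeEquivOfLe (orderFiltration_antitone a.le_succ)).finrank_eq,
    Submodule.finrank_quotient_add_finrank]

theorem sum_finrank_gradedPiece_add_finrank [FiniteDimensional K V] (N : ℕ) :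
    ∑ a ∈ Finset.range N, finrank K (gradedPiece Φ a) + finrank K (orderFiltration Φ N) =
      finrank K V := by
  induction N with
  | zero => rw [Finset.sum_range_zero, zero_add, orderFiltration_zero, finrank_top]
  | succ N ih => rw [Finset.sum_range_succ, add_assoc, ← finrank_orderFiltration_eq, ih]

instance [FiniteDimensional K V] (a : ℕ) : FiniteDimensional K (gradedPiece Φ a) :=
  Module.Finite.map _ _

variable {Φ}

theorem gradedPiece_le_of_forall_exists_coeff_eq {W : Type*} [AddCommGroup W] [Module K W]
    {Ψ : W →ₗ[K] A⟦X⟧} {N a : ℕ} (ha : a < N)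
    (h : ∀ v, ∃ w, ∀ n < N, coeff n (Ψ w) = coeff n (Φ v)) :
    gradedPiece Φ a ≤ gradedPiece Ψ a := by
  rintro _ ⟨v, hv, rfl⟩
  obtain ⟨w, hw⟩ := h v
  refine ⟨w, mem_orderFiltration_iff.mpr fun i hi => ?_, hw a ha⟩
  rw [hw i (hi.trans ha)]
  exact mem_orderFiltration_iff.mp hv i hi

theorem sum_finrank_gradedPiece_le {W : Type*} [AddCommGroup W] [Module K W]
    [FiniteDimensional K W] {Ψ : W →ₗ[K] A⟦X⟧} {N : ℕ}
    (h : ∀ v, ∃ w, ∀ n < N, coeff n (Ψ w) = coeff n (Φ v)) :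
    ∑ a ∈ Finset.range N, finrank K (gradedPiece Φ a) ≤ finrank K W :=
  calc ∑ a ∈ Finset.range N, finrank K (gradedPiece Φ a)
      ≤ ∑ a ∈ Finset.range N, finrank K (gradedPiece Ψ a) :=
        Finset.sum_le_sum fun _ ha => Submodule.finrank_mono
          (gradedPiece_le_of_forall_exists_coeff_eq (Finset.mem_range.mp ha) h)
    _ ≤ finrank K W := (sum_finrank_gradedPiece_add_finrank Ψ N).le.trans' (Nat.le_add_right _ _)

theorem mem_gradedPiece_of_eq_X_pow_mul {a : ℕ} {v : V} {g : A⟦X⟧} (h : Φ v = X ^ a * g) :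
    constantCoeff g ∈ gradedPiece Φ a := by
  refine ⟨v, mem_orderFiltration_iff.mpr fun i hi => ?_, ?_⟩
  · simp [h, coeff_X_pow_mul', hi.not_ge]
  · simp [h, coeff_X_pow_mul']

end OrderFiltration

theorem coeff_pow_mul_pow_eq_zero {R : Type*} [CommSemiring R] {x y : R⟦X⟧} {u w i j n : ℕ}
    (hx : X ^ u ∣ x) (hy : X ^ w ∣ y) (hn : n < u * i + w * j) : coeff n (x ^ i * y ^ j) = 0 := by
  have hdvd : (X : R⟦X⟧) ^ (u * i + w * j) ∣ x ^ i * y ^ j := by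
    rw [pow_add, pow_mul, pow_mul]
    exact mul_dvd_mul (pow_dvd_pow_of_dvd hx i) (pow_dvd_pow_of_dvd hy j)
  exact X_pow_dvd_iff.mp hdvd n hn

end PowerSeries

open PowerSeries

section Substitution

variable {x y : ℂ⟦X⟧}

noncomputable def substXYLinear (x y : ℂ⟦X⟧) : MvPowerSeries (Fin 2) ℝ →ₗ[ℝ] ℂ⟦X⟧ where
  toFun := substXY x y
  map_add' f g := by
    ext n
    simp [substXY, add_mul, Finset.sum_add_distrib]
  map_smul' r f := by
    ext n
    simp [substXY, Finset.smul_sum, Complex.real_smul, mul_assoc]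

@[simp]
theorem substXYLinear_apply (x y : ℂ⟦X⟧) (f : MvPowerSeries (Fin 2) ℝ) :
    substXYLinear x y f = substXY x y f :=
  rfl

theorem rank_JQuot (x y : ℂ⟦X⟧) (a : ℕ) :
    Module.rank ℝ (JQuot x y a) = Module.rank ℝ (gradedPiece (substXYLinear x y) a) :=
  -- `JXY x y a` unfolds to `orderFiltration (substXYLinear x y) a`
  (orderFiltrationQuotEquiv (substXYLinear x y) a).rank_eq

noncomputable def monomialXY (i j : ℕ) : MvPowerSeries (Fin 2) ℝ :=
  MvPowerSeries.monomial (Finsupp.single 0 i + Finsupp.single 1 j) 1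

theorem single_zero_add_single_one_inj {p q i j : ℕ} :
    Finsupp.single (0 : Fin 2) p + Finsupp.single 1 q = Finsupp.single 0 i + Finsupp.single 1 j ↔
      p = i ∧ q = j := by
  refine ⟨fun h => ⟨?_, ?_⟩, fun ⟨hp, hq⟩ => hp ▸ hq ▸ rfl⟩
  · simpa using DFunLike.congr_fun h 0
  · simpa using DFunLike.congr_fun h 1

theorem coeff_monomialXY (p q i j : ℕ) :
    MvPowerSeries.coeff (Finsupp.single 0 p + Finsupp.single 1 q) (monomialXY i j) =
      if p = i ∧ q = j then 1 else 0 := by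
  rw [monomialXY, MvPowerSeries.coeff_monomial]
  exact if_congr single_zero_add_single_one_inj rfl rfl

theorem substXY_monomialXY (hx : X ∣ x) (hy : X ∣ y) (i j : ℕ) :
    substXY x y (monomialXY i j) = x ^ i * y ^ j := by
  ext n
  rw [substXY, coeff_mk, Finset.sum_eq_single (i, j)]
  · simp [coeff_monomialXY]
  · rintro p - hp
    rw [coeff_monomialXY, if_neg fun h => hp (Prod.ext h.1 h.2), Complex.ofReal_zero, zero_mul]
  · intro hij
    rw [coeff_pow_mul_pow_eq_zero (u := 1) (w := 1) (by rwa [pow_one]) (by rwa [pow_one]), mul_zero]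
    simp only [Finset.mem_product, Finset.mem_range, not_and_or, not_lt] at hij
    omega

theorem coeff_substXY_eq_sum (hx : X ∣ x) (hy : X ∣ y) {n : ℕ} {T : Finset (ℕ × ℕ)}
    (hT : ∀ p ∉ T, coeff n (x ^ p.1 * y ^ p.2) = 0) (f : MvPowerSeries (Fin 2) ℝ) :
    coeff n (substXY x y f) = ∑ p ∈ T,
      ((MvPowerSeries.coeff (Finsupp.single (0 : Fin 2) p.1 + Finsupp.single 1 p.2) f : ℝ) : ℂ) *
        coeff n (x ^ p.1 * y ^ p.2) := by
  rw [substXY, coeff_mk]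
  refine (Finset.sum_subset Finset.subset_union_left fun p _ hp => ?_).trans
    (Finset.sum_subset Finset.subset_union_right fun p _ hp => by rw [hT p hp, mul_zero]).symm
  rw [coeff_pow_mul_pow_eq_zero (u := 1) (w := 1) (by rwa [pow_one]) (by rwa [pow_one]), mul_zero]
  simp only [Finset.mem_product, Finset.mem_range, not_and_or, not_lt] at hp
  omega

theorem sum_finrank_gradedPiece_substXYLinear_le_card (hx : X ∣ x) (hy : X ∣ y) {N : ℕ}
    {T : Finset (ℕ × ℕ)} (hT : ∀ p ∉ T, ∀ n < N, coeff n (x ^ p.1 * y ^ p.2) = 0) :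
    ∑ a ∈ Finset.range N, finrank ℝ (gradedPiece (substXYLinear x y) a) ≤ T.card := by
  classical
  let U := Submodule.span ℝ ((T.image fun p => x ^ p.1 * y ^ p.2 : Finset ℂ⟦X⟧) : Set ℂ⟦X⟧)
  refine (sum_finrank_gradedPiece_le (Ψ := U.subtype) fun f => ?_).trans
    ((finrank_span_finset_le_card _).trans Finset.card_image_le)
  let c (p : ℕ × ℕ) := MvPowerSeries.coeff (Finsupp.single 0 p.1 + Finsupp.single 1 p.2) f
  refine ⟨⟨∑ p ∈ T, c p • (x ^ p.1 * y ^ p.2), Submodule.sum_mem _ fun p hp =>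
    Submodule.smul_mem _ _ (Submodule.subset_span (Finset.mem_image_of_mem _ hp))⟩, fun n hn => ?_⟩
  rw [Submodule.subtype_apply, substXYLinear_apply,
    coeff_substXY_eq_sum hx hy fun p hp => hT p hp n hn]
  simp [c, map_sum, Complex.real_smul]

end Substitution

theorem Complex.two_le_finrank_of_mem_of_mul_mem {W : Submodule ℝ ℂ} {z w : ℂ} (hz : z ≠ 0)
    (hw : w.im ≠ 0) (hzW : z ∈ W) (hwzW : w * z ∈ W) : 2 ≤ finrank ℝ W := by
  have hli : LinearIndependent ℝ ![z, w * z] := by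
    refine LinearIndependent.pair_iff.mpr fun s t hst => ?_
    have hcoeff : (s + t * w : ℂ) = 0 := by
      refine (mul_eq_zero.mp ?_).resolve_right hz
      rw [Complex.real_smul, Complex.real_smul] at hst
      linear_combination hst
    have ht : t = 0 := by simpa [hw] using congrArg Complex.im hcoeff
    exact ⟨by simpa [ht] using hcoeff, ht⟩
  calc 2 = finrank ℝ (Submodule.span ℝ (Set.range ![z, w * z])) := by
        rw [finrank_span_eq_card hli, Fintype.card_fin]
    _ ≤ finrank ℝ W := Submodule.finrank_mono <| Submodule.span_le.mpr <| by
        rintro _ ⟨i, rfl⟩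
        fin_cases i
        exacts [hzW, hwzW]

theorem mem_closure_four_six_twentyFive_iff {n : ℕ} :
    n ∈ AddSubmonoid.closure ({4, 6, 25} : Set ℕ) ↔
      n % 2 = 0 ∧ n ≠ 2 ∨ n % 2 = 1 ∧ 25 ≤ n ∧ n ≠ 27 := by
  constructor
  · intro hn
    induction hn using AddSubmonoid.closure_induction with
    | mem m hm =>
      simp only [Set.mem_insert_iff, Set.mem_singleton_iff] at hm
      omega
    | zero => omega
    | add _ _ _ _ _ _ => omega
  · intro hn
    have hgen : ∀ m ∈ ({4, 6, 25} : Set ℕ), m ∈ AddSubmonoid.closure ({4, 6, 25} : Set ℕ) :=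
      fun m hm => AddSubmonoid.subset_closure hm
    have h4 (k : ℕ) : 4 * k ∈ AddSubmonoid.closure ({4, 6, 25} : Set ℕ) := by
      simpa [mul_comm] using AddSubmonoid.nsmul_mem _ (hgen 4 (by simp)) k
    have h6 := hgen 6 (by simp)
    have h25 := hgen 25 (by simp)
    obtain h | h | h | h : n = 4 * (n / 4) ∨ n = 6 + 4 * ((n - 6) / 4) ∨
        n = 25 + 4 * ((n - 25) / 4) ∨ n = 6 + 25 + 4 * ((n - 31) / 4) := by omega
    all_goals rw [h]
    exacts [h4 _, add_mem h6 (h4 _), add_mem h25 (h4 _), add_mem (add_mem h6 h25) (h4 _)]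

theorem exists_eq_four_mul_add_six_mul {n : ℕ} (heven : n % 2 = 0) (hn : n ≠ 2) :
    ∃ i j, n = 4 * i + 6 * j := by
  obtain h | h : n % 4 = 0 ∨ n % 4 = 2 := by omega
  exacts [⟨n / 4, 0, by omega⟩, ⟨(n - 6) / 4, 1, by omega⟩]

open ComplexConjugate

section Curve

variable (α : ℂ)

theorem X_pow_six_dvd_C_mul_X_pow_six_add_X_pow_seven :
    (X : ℂ⟦X⟧) ^ 6 ∣ C α * X ^ 6 + X ^ 7 :=
  ⟨C α + X, by ring⟩

theorem substXY_X_pow_four_monomialXY (i j : ℕ) :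
    substXY (X ^ 4) (C α * X ^ 6 + X ^ 7) (monomialXY i j) =
      X ^ (4 * i + 6 * j) * (C α + X) ^ j := by
  rw [substXY_monomialXY (dvd_pow_self X four_ne_zero)
    ((dvd_pow_self X (by norm_num)).trans (X_pow_six_dvd_C_mul_X_pow_six_add_X_pow_seven α)),
    show (C α * X ^ 6 + X ^ 7 : ℂ⟦X⟧) = X ^ 6 * (C α + X) by ring, mul_pow, ← pow_mul,
    ← pow_mul, ← mul_assoc, ← pow_add]

def lowWeightExponents : Finset (ℕ × ℕ) :=
  (Finset.range 10 ×ˢ Finset.range 7).filter fun p => 4 * p.1 + 6 * p.2 < 40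

theorem sum_finrank_gradedPiece_le_forty {x y : ℂ⟦X⟧} (hx : X ^ 4 ∣ x) (hy : X ^ 6 ∣ y) :
    ∑ a ∈ Finset.range 40, finrank ℝ (gradedPiece (substXYLinear x y) a) ≤ 40 := by
  refine (sum_finrank_gradedPiece_substXYLinear_le_card ((dvd_pow_self X four_ne_zero).trans hx)
    ((dvd_pow_self X (by norm_num)).trans hy) (T := lowWeightExponents)
      fun p hp n hn => coeff_pow_mul_pow_eq_zero hx hy ?_).trans_eq (by decide)
  simp only [lowWeightExponents, Finset.mem_filter, Finset.mem_product, Finset.mem_range] at hp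
  omega

theorem pow_mem_gradedPiece (i j : ℕ) :
    α ^ j ∈ gradedPiece (substXYLinear (X ^ 4) (C α * X ^ 6 + X ^ 7)) (4 * i + 6 * j) := by
  simpa using mem_gradedPiece_of_eq_X_pow_mul (Φ := substXYLinear _ _)
    (substXY_X_pow_four_monomialXY α i j)

/-- The real series `X^i Y^j (Y² - α² X³)(Y² - ᾱ² X³)` has valuation `25 + 4i + 6j`: the
substitution turns `Y² - α² X³` into `2α t¹³ + t¹⁴` and `Y² - ᾱ² X³` into `(α² - ᾱ²) t¹² + ⋯`. -/
theorem mul_pow_mem_gradedPiece (i j : ℕ) :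
    2 * α * (α ^ 2 - conj α ^ 2) * α ^ j ∈
      gradedPiece (substXYLinear (X ^ 4) (C α * X ^ 6 + X ^ 7)) (25 + 4 * i + 6 * j) := by
  have hre : ((2 * (α ^ 2).re : ℝ) : ℂ) = α ^ 2 + conj α ^ 2 := by
    rw [← map_pow, Complex.add_conj]
  have hnormSq : ((Complex.normSq α ^ 2 : ℝ) : ℂ) = α ^ 2 * conj α ^ 2 := by
    rw [Complex.ofReal_pow, Complex.normSq_eq_conj_mul_self]; ring
  have h : substXYLinear (X ^ 4) (C α * X ^ 6 + X ^ 7)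
      (monomialXY i (j + 4) - (2 * (α ^ 2).re) • monomialXY (i + 3) (j + 2) +
        (Complex.normSq α ^ 2) • monomialXY (i + 6) j) =
      X ^ (25 + 4 * i + 6 * j) *
        ((C α + X) ^ j * (C (2 * α) + X) * ((C α + X) ^ 2 - C (conj α ^ 2))) := by
    simp only [map_add, map_sub, map_smul, substXYLinear_apply, substXY_X_pow_four_monomialXY]
    simp only [Algebra.smul_def, PowerSeries.algebraMap_apply, Complex.coe_algebraMap]
    rw [hre, hnormSq]
    simp only [map_add, map_mul, map_pow, map_ofNat]
    ring
  convert mem_gradedPiece_of_eq_X_pow_mul h using 1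
  simp
  ring

variable {α}

theorem exists_forall_mul_pow_mem_gradedPiece (hα : (α ^ 2).im ≠ 0) {n : ℕ}
    (hn : n ∈ AddSubmonoid.closure ({4, 6, 25} : Set ℕ)) :
    ∃ c : ℂ, (∀ j, c * α ^ j ≠ 0) ∧ ∃ b i j, n = b + 4 * i + 6 * j ∧ ∀ i j,
      c * α ^ j ∈
        gradedPiece (substXYLinear (X ^ 4) (C α * X ^ 6 + X ^ 7)) (b + 4 * i + 6 * j) := by
  have hα0 : α ≠ 0 := by rintro rfl; simp at hα
  rcases mem_closure_four_six_twentyFive_iff.mp hn with ⟨heven, hn2⟩ | ⟨hodd, hn25, hn27⟩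
  · obtain ⟨i, j, rfl⟩ := exists_eq_four_mul_add_six_mul heven hn2
    exact ⟨1, fun j => by simpa using pow_ne_zero j hα0, 0, i, j, by ring,
      fun i j => by simpa using pow_mem_gradedPiece α i j⟩
  · obtain ⟨i, j, hij⟩ := exists_eq_four_mul_add_six_mul (n := n - 25) (by omega) (by omega)
    have hsub : α ^ 2 - conj α ^ 2 ≠ 0 := by
      rw [← map_pow, Complex.sub_conj]
      simp [hα]
    exact ⟨_, fun j => mul_ne_zero (mul_ne_zero (mul_ne_zero two_ne_zero hα0) hsub)
      (pow_ne_zero j hα0), 25, i, j, by omega, mul_pow_mem_gradedPiece α⟩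

theorem one_le_finrank_gradedPiece (hα : (α ^ 2).im ≠ 0) {n : ℕ}
    (hn : n ∈ AddSubmonoid.closure ({4, 6, 25} : Set ℕ)) :
    1 ≤ finrank ℝ (gradedPiece (substXYLinear (X ^ 4) (C α * X ^ 6 + X ^ 7)) n) := by
  obtain ⟨c, hc, b, i, j, rfl, hmem⟩ := exists_forall_mul_pow_mem_gradedPiece hα hn
  exact Submodule.one_le_finrank_iff.mpr ((Submodule.ne_bot_iff _).mpr ⟨_, hmem i j, hc j⟩)

theorem two_le_finrank_gradedPiece_add_twelve (hα : (α ^ 2).im ≠ 0) {n : ℕ}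
    (hn : n ∈ AddSubmonoid.closure ({4, 6, 25} : Set ℕ)) :
    2 ≤ finrank ℝ (gradedPiece (substXYLinear (X ^ 4) (C α * X ^ 6 + X ^ 7)) (n + 12)) := by
  obtain ⟨c, hc, b, i, j, rfl, hmem⟩ := exists_forall_mul_pow_mem_gradedPiece hα hn
  have h₁ := hmem (i + 3) j
  have h₂ := hmem i (j + 2)
  rw [show b + 4 * (i + 3) + 6 * j = b + 4 * i + 6 * j + 12 by ring] at h₁
  rw [show b + 4 * i + 6 * (j + 2) = b + 4 * i + 6 * j + 12 by ring,
    show c * α ^ (j + 2) = α ^ 2 * (c * α ^ j) by ring] at h₂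
  exact Complex.two_le_finrank_of_mem_of_mul_mem (hc j) hα h₁ h₂

end Curve

section

open scoped Classical

theorem ite_add_ite_le_finrank_gradedPiece {α : ℂ} (hα : (α ^ 2).im ≠ 0) (a : ℕ) :
    (if a ∈ AddSubmonoid.closure ({4, 6, 25} : Set ℕ) then 1 else 0) +
        (if 12 ≤ a ∧ a - 12 ∈ AddSubmonoid.closure ({4, 6, 25} : Set ℕ) then 1 else 0) ≤
      finrank ℝ (gradedPiece (substXYLinear (X ^ 4) (C α * X ^ 6 + X ^ 7)) a) := by
  split_ifs with h₁ h₂ h₂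
  · have h := two_le_finrank_gradedPiece_add_twelve hα h₂.2
    rwa [Nat.sub_add_cancel h₂.1] at h
  · exact one_le_finrank_gradedPiece hα h₁
  · rw [mem_closure_four_six_twentyFive_iff] at h₁ h₂
    omega
  · exact Nat.zero_le _

/-- `40` is also the number of monomials `X^i Y^j` with `4i + 6j < 40`, so that the bound
`sum_finrank_gradedPiece_le_forty` forces equality in `ite_add_ite_le_finrank_gradedPiece`
for `a < 40`. -/
theorem sum_range_forty_ite_mem_closure :
    ∑ a ∈ Finset.range 40,
      ((if a ∈ AddSubmonoid.closure ({4, 6, 25} : Set ℕ) then 1 else 0) +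
        (if 12 ≤ a ∧ a - 12 ∈ AddSubmonoid.closure ({4, 6, 25} : Set ℕ) then 1 else 0)) = 40 := by
  simp only [mem_closure_four_six_twentyFive_iff]
  decide

theorem finrank_gradedPiece_eq {α : ℂ} (hα : (α ^ 2).im ≠ 0) (a : ℕ) :
    finrank ℝ (gradedPiece (substXYLinear (X ^ 4) (C α * X ^ 6 + X ^ 7)) a) =
      (if a ∈ AddSubmonoid.closure ({4, 6, 25} : Set ℕ) then 1 else 0) +
        (if 12 ≤ a ∧ a - 12 ∈ AddSubmonoid.closure ({4, 6, 25} : Set ℕ) then 1 else 0) := by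
  refine le_antisymm ?_ (ite_add_ite_le_finrank_gradedPiece hα a)
  by_cases ha : a < 40
  · have hle (b : ℕ) := ite_add_ite_le_finrank_gradedPiece hα b
    have hsum := (sum_finrank_gradedPiece_le_forty dvd_rfl
      (X_pow_six_dvd_C_mul_X_pow_six_add_X_pow_seven α)).trans sum_range_forty_ite_mem_closure.ge
    exact ((Finset.sum_eq_sum_iff_of_le fun b _ => hle b).mp
      ((Finset.sum_le_sum fun b _ => hle b).antisymm hsum) a (Finset.mem_range.mpr ha)).ge
  · calc _ ≤ 2 := (Submodule.finrank_le _).trans_eq Complex.finrank_real_complex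
      _ = _ := by
        simp only [mem_closure_four_six_twentyFive_iff]
        rw [if_pos (by omega), if_pos (by omega)]

end

open scoped Classical

/-- for `x = t^4`, `y = α t^6 + t^7` with `Im(α²) ≠ 0` and
`S = ⟨4, 6, 25⟩`, the dimension of `J(a)/J(a+1)` equals
`[a ∈ S] + [a ≥ 12 ∧ a − 12 ∈ S]`. -/
theorem rank_JQuot_example_two (α : ℂ) (hα : (α ^ 2).im ≠ 0)
    (x y : PowerSeries ℂ) (hxdef : x = (X : ℂ⟦X⟧) ^ 4)
    (hydef : y = PowerSeries.C α * (X : ℂ⟦X⟧) ^ 6 + X ^ 7)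
    (S : AddSubmonoid ℕ) (hS : S = AddSubmonoid.closure ({4, 6, 25} : Set ℕ)) :
    ∀ a : ℕ,
      Module.rank ℝ (JQuot x y a) =
        (((if a ∈ S then 1 else 0) + (if 12 ≤ a ∧ a - 12 ∈ S then 1 else 0) : ℕ) :
          Cardinal) := by
  intro a
  subst hxdef hydef hS
  rw [rank_JQuot, ← finrank_eq_rank, finrank_gradedPiece_eq hα]
end
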